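/- For the substitution system with rules B → BO, O → BYO, Y → BYG, G → BYG starting from G, the total letter count t n at level n satisfies the recurrence t (n+2) = 3 * t (n+1) - t n, with t 0 = 1 and t 1 = 3. -/

import Mathlib

inductive Letter | B | O | Y | G
deriving DecidableEq

def sub : Letter → List Letter
  | .B => [.B, .O]
  | .O => [.B, .Y, .O]
  | .Y => [.B, .Y, .G]
  | .G => [.B, .Y, .G]

/-- Level `n` of the substitution system, starting from the single letter `G`. -/
def level : ℕ → List Letter
  | 0 => [.G]
  | n + 1 => (level n).flatMap sub

/-- Fibonacci sequence with `f 0 = f 1 = 1`. -/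
def f : ℕ → ℕ
  | 0 => 1
  | 1 => 1
  | n + 2 => f (n + 1) + f n

/-! Every image word has length 3 except that of `B`, which has length 2, so
`|σ w| = 3 |w| - #B(w)`; and every image word contains exactly one `B`, so `#B(σ w) = |w|`.
Applied to `w = level (n + 1) = σ (level n)` this gives `t (n + 2) = 3 t (n + 1) - t n`. -/

lemma length_flatMap_sub_add_count_B (w : List Letter) :
    (w.flatMap sub).length + w.count .B = 3 * w.length := by
  induction w with
  | nil => rfl
  | cons a w ih => cases a <;> simp [sub] at ih ⊢ <;> omega

lemma count_B_flatMap_sub (w : List Letter) : (w.flatMap sub).count .B = w.length := by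
  induction w with
  | nil => rfl
  | cons a w ih => cases a <;> simp [sub] at ih ⊢ <;> omega

lemma length_level_add_two (n : ℕ) :
    (level (n + 2)).length + (level n).length = 3 * (level (n + 1)).length := by
  rw [← count_B_flatMap_sub (level n)]
  exact length_flatMap_sub_add_count_B (level (n + 1))

theorem levels_count_recurrence :
    (level 0).length = 1 ∧ (level 1).length = 3 ∧
    ∀ n : ℕ, (level (n + 2)).length = 3 * (level (n + 1)).length - (level n).length :=
  ⟨rfl, rfl, fun n => by have := length_level_add_two n; omega⟩
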